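/- arXiv:2405.04696 — 2 statements merged into one kernel-verified Lean document; each statement's English description precedes it below -/
import Mathlib

section
/- In the shared-location model with m = 3 candidates: suppose the density f additionally satisfies F(y) − F(y/2) ≤ γ for all y ∈ [0,1] (for a constant γ > 0). If X = (x₁, x₂, x₃) with x₁ = x₂ < x₃ is an ε-equilibrium, then 1 ≤ 7ε + γ. -/
open MeasureTheory Classical

/-- `Fcdf f y = ∫₀^y f`, the mass of voters in `[0, y]`. -/
noncomputable def Fcdf (f : ℝ → ℝ) (y : ℝ) : ℝ := ∫ z in (0:ℝ)..y, f z

/-- Utility (vote share) of a candidate located at `p`, given a set `S` of positions: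
the voters between the midpoint with the nearest position of `S` strictly to the left
(or `0` if none) and the midpoint with the nearest position of `S` strictly to the
right (or `1` if none). -/
noncomputable def util (f : ℝ → ℝ) (p : ℝ) (S : Set ℝ) : ℝ :=
  Fcdf f (if {s ∈ S | p < s}.Nonempty then (p + sInf {s ∈ S | p < s}) / 2 else 1)
    - Fcdf f (if {s ∈ S | s < p}.Nonempty then (p + sSup {s ∈ S | s < p}) / 2 else 0)

/-- Shared-location model: utility of candidate `i` in the profile `x`. The group of
candidates sharing the position `x i` splits equally the voters between the midpoint
with the nearest distinct position to the left (or `0` if none) and the midpoint with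
the nearest distinct position to the right (or `1` if none). -/
noncomputable def utilShared (f : ℝ → ℝ) {m : ℕ} (x : Fin m → ℝ) (i : Fin m) : ℝ :=
  util f (x i) (Set.range x) / (Nat.card {j : Fin m // x j = x i} : ℝ)

/-- Shared-location model: the profile `x` is an `ε`-equilibrium if no candidate can
move to any location in `[0,1]` (possibly coinciding with other candidates) and increase
his utility by more than `ε`. -/
def IsEquilibriumShared (f : ℝ → ℝ) {m : ℕ} (x : Fin m → ℝ) (ε : ℝ) : Prop :=
  ∀ i : Fin m, ∀ x' ∈ Set.Icc (0:ℝ) 1,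
    utilShared f (Function.update x i x') i ≤ utilShared f x i + ε

section Aux

open Set Filter Topology

theorem Fcdf_contOn (f : ℝ → ℝ) (hfi : IntervalIntegrable f MeasureTheory.volume 0 1) :
    ContinuousOn (Fcdf f) (Icc 0 1) := by
  have h : MeasureTheory.IntegrableOn f (Set.uIcc (0:ℝ) 1) MeasureTheory.volume := by
    rw [uIcc_of_le (by norm_num : (0:ℝ) ≤ 1)]
    exact (intervalIntegrable_iff_integrableOn_Icc_of_le (by norm_num)).mp hfi
  have := intervalIntegral.continuousOn_primitive_interval (a := (0:ℝ)) (b := (1:ℝ)) h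
  show ContinuousOn (fun y => ∫ z in (0:ℝ)..y, f z) (Icc 0 1)
  simpa [Fcdf, uIcc_of_le (by norm_num : (0:ℝ) ≤ 1)] using this

theorem Fcdf_mono (f : ℝ → ℝ) (hfi : IntervalIntegrable f MeasureTheory.volume 0 1)
    (hf0 : ∀ z ∈ Set.Icc (0:ℝ) 1, 0 ≤ f z) :
    ∀ u v : ℝ, 0 ≤ u → u ≤ v → v ≤ 1 → Fcdf f u ≤ Fcdf f v := by
  intro u v hu huv hv
  have h01 : (0:ℝ) ≤ 1 := by norm_num
  have sub : ∀ p q : ℝ, 0 ≤ p → q ≤ 1 → p ≤ q → IntervalIntegrable f MeasureTheory.volume p q := by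
    intro p q hp hq hpq
    refine hfi.mono_set ?_
    rw [uIcc_of_le hpq, uIcc_of_le h01]
    exact Icc_subset_Icc hp hq
  have hiu := sub 0 u le_rfl (huv.trans hv) hu
  have hiv := sub u v hu hv huv
  have hsplit : Fcdf f u + (∫ z in u..v, f z) = Fcdf f v :=
    intervalIntegral.integral_add_adjacent_intervals hiu hiv
  have hnn : 0 ≤ ∫ z in u..v, f z := by
    apply intervalIntegral.integral_nonneg huv
    intro z hz
    exact hf0 z ⟨hu.trans hz.1, hz.2.trans hv⟩
  linarith

theorem le_of_Ico_bound (g : ℝ → ℝ) (c u C : ℝ) (hcu : c < u)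
    (hg : ContinuousWithinAt g (Set.Ico c u) u)
    (h : ∀ t ∈ Set.Ico c u, g t ≤ C) : g u ≤ C := by
  haveI hne : (𝓝[Set.Ico c u] u).NeBot := by
    rw [← mem_closure_iff_nhdsWithin_neBot, closure_Ico hcu.ne]
    exact ⟨hcu.le, le_rfl⟩
  exact le_of_tendsto hg (eventually_nhdsWithin_of_forall h)

theorem ge_of_Ioo_bound (g : ℝ → ℝ) (u d C : ℝ) (hud : u < d)
    (hg : ContinuousWithinAt g (Set.Ioo u d) u)
    (h : ∀ t ∈ Set.Ioo u d, C ≤ g t) : C ≤ g u := by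
  haveI hne : (𝓝[Set.Ioo u d] u).NeBot := by
    rw [← mem_closure_iff_nhdsWithin_neBot, closure_Ioo hud.ne]
    exact ⟨le_rfl, hud.le⟩
  exact ge_of_tendsto hg (eventually_nhdsWithin_of_forall h)

theorem range3' (a b c : ℝ) : Set.range ![a,b,c] = {a, b, c} := by
  ext t; simp [Matrix.range_cons, Matrix.range_empty]; tauto

theorem cardHelp' {P : Fin 3 → Prop} {S : Set (Fin 3)} (h : {j : Fin 3 | P j} = S) {n : ℕ}
    (hn : S.ncard = n) : Nat.card {j : Fin 3 // P j} = n := by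
  rw [← h] at hn
  exact (Nat.card_coe_set_eq _).trans hn

theorem upd0 (p q r t : ℝ) : Function.update ![p,q,r] 0 t = ![t,q,r] := by
  funext j; fin_cases j <;> simp [Function.update]

theorem upd2 (p q r t : ℝ) : Function.update ![p,q,r] 2 t = ![p,q,t] := by
  funext j; fin_cases j <;> simp [Function.update]

theorem U0 (f : ℝ → ℝ) (a b : ℝ) (hab : a < b) :
    utilShared f ![a,a,b] 0 = Fcdf f ((a+b)/2) / 2 := by
  have hup : {s ∈ Set.range ![a,a,b] | (![a,a,b] 0 : ℝ) < s} = {b} := by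
    rw [range3']
    ext t
    simp only [Set.mem_setOf_eq, Set.mem_insert_iff, Set.mem_singleton_iff, Matrix.cons_val_zero]
    constructor
    · rintro ⟨h1 | h1 | h1, h2⟩ <;> first | rfl | (subst h1; linarith)
    · rintro rfl; exact ⟨by tauto, hab⟩
  have hlo : {s ∈ Set.range ![a,a,b] | s < (![a,a,b] 0 : ℝ)} = ∅ := by
    rw [range3']
    ext t
    simp only [Set.mem_setOf_eq, Set.mem_insert_iff, Set.mem_singleton_iff, Matrix.cons_val_zero,
      Set.mem_empty_iff_false, iff_false, not_and]
    rintro (rfl | rfl | rfl) <;> linarith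
  have hc : Nat.card {j : Fin 3 // (![a,a,b] : Fin 3 → ℝ) j = ![a,a,b] 0} = 2 := by
    refine cardHelp' (S := {0, 1}) ?_ (Set.ncard_pair (by decide))
    ext j; fin_cases j <;> simp [hab.ne']
  unfold utilShared util
  rw [hup, hlo, hc]
  simp [csInf_singleton, Set.not_nonempty_empty, Fcdf, intervalIntegral.integral_same,
    Matrix.cons_val_zero]

theorem U2 (f : ℝ → ℝ) (a b : ℝ) (hab : a < b) :
    utilShared f ![a,a,b] 2 = Fcdf f 1 - Fcdf f ((b+a)/2) := by
  have e2 : (![a,a,b] : Fin 3 → ℝ) 2 = b := rfl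
  have hup : {s ∈ Set.range ![a,a,b] | (![a,a,b] 2 : ℝ) < s} = ∅ := by
    rw [range3', e2]
    ext t
    simp only [Set.mem_setOf_eq, Set.mem_insert_iff, Set.mem_singleton_iff,
      Set.mem_empty_iff_false, iff_false, not_and]
    rintro (rfl | rfl | rfl) <;> linarith
  have hlo : {s ∈ Set.range ![a,a,b] | s < (![a,a,b] 2 : ℝ)} = {a} := by
    rw [range3', e2]
    ext t
    simp only [Set.mem_setOf_eq, Set.mem_insert_iff, Set.mem_singleton_iff]
    constructor
    · rintro ⟨h1 | h1 | h1, h2⟩ <;> first | assumption | (subst h1; linarith)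
    · rintro rfl; exact ⟨by tauto, hab⟩
  have hc : Nat.card {j : Fin 3 // (![a,a,b] : Fin 3 → ℝ) j = ![a,a,b] 2} = 1 := by
    refine cardHelp' (S := {2}) ?_ (Set.ncard_singleton _)
    ext j; fin_cases j <;> simp [e2, hab.ne]
  unfold utilShared util
  rw [hup, hlo, hc, e2]
  simp [csSup_singleton, Set.not_nonempty_empty]

theorem D1 (f : ℝ → ℝ) (a b x' : ℝ) (h1 : x' < a) (h2 : a < b) :
    utilShared f ![x',a,b] 0 = Fcdf f ((x'+a)/2) - Fcdf f 0 := by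
  have e0 : (![x',a,b] : Fin 3 → ℝ) 0 = x' := rfl
  have hup : {s ∈ Set.range ![x',a,b] | (![x',a,b] 0 : ℝ) < s} = {a, b} := by
    rw [range3', e0]
    ext t
    simp only [Set.mem_setOf_eq, Set.mem_insert_iff, Set.mem_singleton_iff]
    constructor
    · rintro ⟨h | h | h, hlt⟩ <;> subst h
      · linarith
      · exact Or.inl rfl
      · exact Or.inr rfl
    · rintro (rfl | rfl)
      · exact ⟨by tauto, h1⟩
      · exact ⟨by tauto, h1.trans h2⟩
  have hlo : {s ∈ Set.range ![x',a,b] | s < (![x',a,b] 0 : ℝ)} = ∅ := by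
    rw [range3', e0]
    ext t
    simp only [Set.mem_setOf_eq, Set.mem_insert_iff, Set.mem_singleton_iff,
      Set.mem_empty_iff_false, iff_false, not_and]
    rintro (rfl | rfl | rfl) <;> linarith
  have hc : Nat.card {j : Fin 3 // (![x',a,b] : Fin 3 → ℝ) j = ![x',a,b] 0} = 1 := by
    refine cardHelp' (S := {0}) ?_ (Set.ncard_singleton _)
    ext j; fin_cases j <;> simp [e0, h1.ne', (h1.trans h2).ne']
  unfold utilShared util
  rw [hup, hlo, hc, e0]
  have : sInf {a, b} = a := by rw [csInf_pair]; exact min_eq_left h2.le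
  simp [this, Set.not_nonempty_empty, Set.insert_nonempty]

theorem D3 (f : ℝ → ℝ) (a b x' : ℝ) (h1 : a < b) (h2 : b < x') :
    utilShared f ![x',a,b] 0 = Fcdf f 1 - Fcdf f ((x'+b)/2) := by
  have e0 : (![x',a,b] : Fin 3 → ℝ) 0 = x' := rfl
  have hup : {s ∈ Set.range ![x',a,b] | (![x',a,b] 0 : ℝ) < s} = ∅ := by
    rw [range3', e0]
    ext t
    simp only [Set.mem_setOf_eq, Set.mem_insert_iff, Set.mem_singleton_iff,
      Set.mem_empty_iff_false, iff_false, not_and]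
    rintro (rfl | rfl | rfl) <;> linarith
  have hlo : {s ∈ Set.range ![x',a,b] | s < (![x',a,b] 0 : ℝ)} = {a, b} := by
    rw [range3', e0]
    ext t
    simp only [Set.mem_setOf_eq, Set.mem_insert_iff, Set.mem_singleton_iff]
    constructor
    · rintro ⟨h | h | h, hlt⟩ <;> subst h
      · linarith
      · exact Or.inl rfl
      · exact Or.inr rfl
    · rintro (rfl | rfl)
      · exact ⟨by tauto, h1.trans h2⟩
      · exact ⟨by tauto, h2⟩
  have hc : Nat.card {j : Fin 3 // (![x',a,b] : Fin 3 → ℝ) j = ![x',a,b] 0} = 1 := by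
    refine cardHelp' (S := {0}) ?_ (Set.ncard_singleton _)
    ext j; fin_cases j <;> simp [e0, (h1.trans h2).ne, h2.ne]
  unfold utilShared util
  rw [hup, hlo, hc, e0]
  have : sSup {a, b} = b := by rw [csSup_pair]; exact max_eq_right h1.le
  simp [this, Set.not_nonempty_empty, Set.insert_nonempty]

end Aux

/-- Shared-location model, three candidates: if moreover
`F(y) − F(y/2) ≤ γ` for all `y ∈ [0,1]`, and `x₁ = x₂ < x₃` is an `ε`-equilibrium, then
`1 ≤ 7ε + γ`. -/
theorem stmt18 (f : ℝ → ℝ) (M ε γ x₁ x₂ x₃ : ℝ)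
    (hM : 0 < M)
    (hfi : IntervalIntegrable f volume 0 1)
    (hf0 : ∀ z ∈ Set.Icc (0:ℝ) 1, 0 ≤ f z)
    (hfM : ∀ z ∈ Set.Icc (0:ℝ) 1, f z ≤ M)
    (hf1 : (∫ z in (0:ℝ)..1, f z) = 1)
    (hγ : 0 < γ)
    (hγF : ∀ y ∈ Set.Icc (0:ℝ) 1, Fcdf f y - Fcdf f (y / 2) ≤ γ)
    (h0 : 0 ≤ x₁) (h12 : x₁ = x₂) (h23 : x₂ < x₃) (h3 : x₃ ≤ 1)
    (heq : IsEquilibriumShared f ![x₁, x₂, x₃] ε) :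
    1 ≤ 7 * ε + γ := by
  subst h12
  have hab : x₁ < x₃ := h23
  have hb1 : x₁ < 1 := lt_of_lt_of_le hab h3
  have hmono := Fcdf_mono f hfi hf0
  have hcont := Fcdf_contOn f hfi
  have hF0 : Fcdf f 0 = 0 := intervalIntegral.integral_same
  have hF1 : Fcdf f 1 = 1 := hf1
  set A := Fcdf f ((x₁ + x₃) / 2) with hA
  set B := Fcdf f x₃ with hB
  set Fa := Fcdf f x₁ with hFa
  have hm0 : 0 ≤ (x₁ + x₃) / 2 := by linarith
  have hm1 : (x₁ + x₃) / 2 ≤ 1 := by linarith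
  have hmlt : x₁ < (x₁ + x₃) / 2 := by linarith
  have hmlt' : (x₁ + x₃) / 2 < x₃ := by linarith
  have hA0 : 0 ≤ A := by
    have := hmono 0 ((x₁ + x₃) / 2) le_rfl hm0 hm1
    rw [hF0] at this; exact this
  have hU0 : utilShared f ![x₁, x₁, x₃] 0 = A / 2 := U0 f x₁ x₃ hab
  have hU2 : utilShared f ![x₁, x₁, x₃] 2 = 1 - A := by
    rw [U2 f x₁ x₃ hab, hF1, show (x₃ + x₁) / 2 = (x₁ + x₃) / 2 by ring]
  -- ε ≥ 0
  have hε0 : 0 ≤ ε := by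
    have h := heq 0 x₁ ⟨h0, hb1.le⟩
    rw [upd0] at h
    linarith
  -- K1 : Fa ≤ A/2 + ε
  have hK1 : Fa ≤ A / 2 + ε := by
    rcases eq_or_lt_of_le h0 with h0' | h0'
    · rw [hFa, ← h0', hF0]; linarith
    · refine le_of_Ico_bound (Fcdf f) (x₁ / 2) x₁ (A / 2 + ε) (by linarith) ?_ ?_
      · exact (hcont x₁ ⟨h0, hb1.le⟩).mono
          (fun t ht => ⟨by rcases ht with ⟨h1, h2⟩; linarith, by rcases ht with ⟨h1, h2⟩; linarith⟩)
      · intro t ht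
        rcases ht with ⟨ht1, ht2⟩
        have hx'0 : 0 ≤ 2 * t - x₁ := by linarith
        have hx'lt : 2 * t - x₁ < x₁ := by linarith
        have h := heq 0 (2 * t - x₁) ⟨hx'0, by linarith⟩
        rw [upd0, D1 f x₁ x₃ (2 * t - x₁) hx'lt hab, hF0, hU0,
          show (2 * t - x₁ + x₁) / 2 = t by ring] at h
        linarith
  -- K2 : A - ε ≤ Fa
  have hK2 : A - ε ≤ Fa := by
    refine ge_of_Ioo_bound (Fcdf f) x₁ ((x₁ + x₃) / 2) (A - ε) hmlt ?_ ?_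
    · exact (hcont x₁ ⟨h0, hb1.le⟩).mono
        (fun t ht => ⟨by rcases ht with ⟨h1, h2⟩; linarith, by rcases ht with ⟨h1, h2⟩; linarith⟩)
    · intro t ht
      rcases ht with ⟨ht1, ht2⟩
      have hx'gt : x₁ < 2 * t - x₁ := by linarith
      have hx'lt : 2 * t - x₁ < x₃ := by linarith
      have h := heq 2 (2 * t - x₁) ⟨by linarith, by linarith⟩
      rw [upd2, U2 f x₁ (2 * t - x₁) hx'gt, hF1, hU2,
        show (2 * t - x₁ + x₁) / 2 = t by ring] at h
      linarith
  have hA4 : A ≤ 4 * ε := by linarith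
  -- K3 : 1 - B ≤ A/2 + ε
  have hK3 : 1 - B ≤ A / 2 + ε := by
    rcases eq_or_lt_of_le h3 with h3' | h3'
    · rw [hB, h3', hF1]; linarith
    · have hgoal : 1 - A / 2 - ε ≤ B := by
        refine ge_of_Ioo_bound (Fcdf f) x₃ ((1 + x₃) / 2) (1 - A / 2 - ε) (by linarith) ?_ ?_
        · exact (hcont x₃ ⟨by linarith, h3⟩).mono
            (fun t ht => ⟨by rcases ht with ⟨h1, h2⟩; linarith, by rcases ht with ⟨h1, h2⟩; linarith⟩)
        · intro t ht
          rcases ht with ⟨ht1, ht2⟩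
          have hx'gt : x₃ < 2 * t - x₃ := by linarith
          have hx'le : 2 * t - x₃ ≤ 1 := by linarith
          have h := heq 0 (2 * t - x₃) ⟨by linarith, hx'le⟩
          rw [upd0, D3 f x₁ x₃ (2 * t - x₃) hab hx'gt, hF1, hU0,
            show (2 * t - x₃ + x₃) / 2 = t by ring] at h
          linarith
      linarith
  -- final case split
  rcases le_or_gt (x₁ + x₃) 1 with hcase | hcase
  · have hγ2 := hγF (x₁ + x₃) ⟨by linarith, hcase⟩
    have hBle : B ≤ Fcdf f (x₁ + x₃) := hmono x₃ (x₁ + x₃) (by linarith) (by linarith) hcase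
    have : Fcdf f ((x₁ + x₃) / 2) = A := rfl
    linarith
  · have hγ1 := hγF 1 ⟨by norm_num, le_rfl⟩
    have hhalf : Fcdf f (1 / 2) ≤ A := hmono (1 / 2) ((x₁ + x₃) / 2) (by norm_num) (by linarith) hm1
    rw [hF1] at hγ1
    linarith
end

section
/- In the shared-location model with m = 3 candidates: suppose the density f additionally satisfies F(y) − F(y/2) ≤ γ for all y ∈ [0,1] (for a constant γ > 0). If X = (x₁, x₂, x₃) with x₁ < x₂ = x₃ is an ε-equilibrium, then 1 ≤ 6ε + 4γ. -/
open MeasureTheory Classical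

/-- Shared-location model, three candidates: if moreover
`F(y) − F(y/2) ≤ γ` for all `y ∈ [0,1]`, and `x₁ < x₂ = x₃` is an `ε`-equilibrium, then
`1 ≤ 6ε + 4γ`. -/
theorem stmt19 (f : ℝ → ℝ) (M ε γ x₁ x₂ x₃ : ℝ)
    (hM : 0 < M)
    (hfi : IntervalIntegrable f volume 0 1)
    (hf0 : ∀ z ∈ Set.Icc (0:ℝ) 1, 0 ≤ f z)
    (hfM : ∀ z ∈ Set.Icc (0:ℝ) 1, f z ≤ M)
    (hf1 : (∫ z in (0:ℝ)..1, f z) = 1)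
    (hγ : 0 < γ)
    (hγF : ∀ y ∈ Set.Icc (0:ℝ) 1, Fcdf f y - Fcdf f (y / 2) ≤ γ)
    (h0 : 0 ≤ x₁) (h12 : x₁ < x₂) (h23 : x₂ = x₃) (h3 : x₃ ≤ 1)
    (heq : IsEquilibriumShared f ![x₁, x₂, x₃] ε) :
    1 ≤ 6 * ε + 4 * γ := by
  subst h23
  have h01 : (0:ℝ) ≤ 1 := by norm_num
  have hx20 : 0 ≤ x₂ := le_trans h0 h12.le
  have hint : ∀ a b : ℝ, 0 ≤ a → a ≤ b → b ≤ 1 → IntervalIntegrable f volume a b := by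
    intro a b ha hab hb
    refine hfi.mono_set ?_
    rw [Set.uIcc_of_le hab, Set.uIcc_of_le h01]
    exact Set.Icc_subset_Icc ha hb
  have hsub : ∀ a b : ℝ, 0 ≤ a → a ≤ b → b ≤ 1 → Fcdf f b - Fcdf f a = ∫ z in a..b, f z := by
    intro a b ha hab hb
    exact intervalIntegral.integral_interval_sub_left (hint 0 b le_rfl (ha.trans hab) hb)
      (hint 0 a le_rfl ha (hab.trans hb))
  have hmono : ∀ a b : ℝ, 0 ≤ a → a ≤ b → b ≤ 1 → Fcdf f a ≤ Fcdf f b := by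
    intro a b ha hab hb
    have h1 := hsub a b ha hab hb
    have h2 : 0 ≤ ∫ z in a..b, f z :=
      intervalIntegral.integral_nonneg hab (fun z hz => hf0 z ⟨ha.trans hz.1, hz.2.trans hb⟩)
    linarith
  have hlip : ∀ a b : ℝ, 0 ≤ a → a ≤ b → b ≤ 1 → Fcdf f b - Fcdf f a ≤ M * (b - a) := by
    intro a b ha hab hb
    rw [hsub a b ha hab hb]
    have h := intervalIntegral.integral_mono_on hab (hint a b ha hab hb) intervalIntegrable_const
      (fun z hz => hfM z ⟨ha.trans hz.1, hz.2.trans hb⟩)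
    rw [intervalIntegral.integral_const, smul_eq_mul] at h
    linarith
  have F0 : Fcdf f 0 = 0 := intervalIntegral.integral_same
  have F1 : Fcdf f 1 = 1 := hf1
  have hτ0 : (0:ℝ) ≤ (x₁ + x₂) / 2 := by linarith
  have hτ1 : (x₁ + x₂) / 2 ≤ 1 := by linarith
  have hτx2 : (x₁ + x₂) / 2 ≤ x₂ := by linarith
  -- the current utility of candidate 2 (index 1)
  have hrange : Set.range ![x₁, x₂, x₂] = {x₁, x₂} := by
    ext s
    simp [Matrix.range_cons, Matrix.range_empty]
    tauto
  have hU2 : utilShared f ![x₁, x₂, x₂] 1 = (1 - Fcdf f ((x₁ + x₂) / 2)) / 2 := by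
    have hcard : Nat.card {j : Fin 3 // ![x₁, x₂, x₂] j = x₂} = 2 := by
      rw [Nat.card_eq_fintype_card, Fintype.card_subtype,
        show (Finset.univ.filter fun j => ![x₁, x₂, x₂] j = x₂) = {1, 2} from by
          ext j; fin_cases j <;> simp [h12.ne]]
      decide
    have he : {s ∈ Set.range ![x₁, x₂, x₂] | x₂ < s} = ∅ := by
      rw [hrange]; ext s; simp; rintro (rfl | rfl) <;> linarith
    have hl : {s ∈ Set.range ![x₁, x₂, x₂] | s < x₂} = {x₁} := by
      rw [hrange]; ext s
      simp only [Set.mem_setOf_eq, Set.mem_insert_iff, Set.mem_singleton_iff]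
      constructor
      · rintro ⟨rfl | rfl, h⟩
        · rfl
        · linarith
      · rintro rfl; exact ⟨Or.inl rfl, h12⟩
    simp only [utilShared, util]
    rw [show ![x₁, x₂, x₂] 1 = x₂ from rfl]
    rw [he, hl, hcard]
    simp [csSup_singleton, F1]
    rw [show (x₂ + x₁) / 2 = (x₁ + x₂) / 2 by ring]
  -- deviation A: candidate 2 moves to x₁
  have keyA : Fcdf f ((x₁ + x₂) / 2) / 2 ≤ (1 - Fcdf f ((x₁ + x₂) / 2)) / 2 + ε := by
    have hc := heq 1 x₁ ⟨h0, by linarith⟩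
    rw [hU2] at hc
    rw [show Function.update ![x₁, x₂, x₂] 1 x₁ = ![x₁, x₁, x₂] from by
      ext j; fin_cases j <;> simp [Function.update]] at hc
    have hrangeA : Set.range ![x₁, x₁, x₂] = {x₁, x₂} := by
      ext s
      simp [Matrix.range_cons, Matrix.range_empty]
      tauto
    have hcard : Nat.card {j : Fin 3 // ![x₁, x₁, x₂] j = x₁} = 2 := by
      rw [Nat.card_eq_fintype_card, Fintype.card_subtype,
        show (Finset.univ.filter fun j => ![x₁, x₁, x₂] j = x₁) = {0, 1} from by
          ext j; fin_cases j <;> simp [h12.ne']]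
      decide
    have he : {s ∈ Set.range ![x₁, x₁, x₂] | x₁ < s} = {x₂} := by
      rw [hrangeA]; ext s
      simp only [Set.mem_setOf_eq, Set.mem_insert_iff, Set.mem_singleton_iff]
      constructor
      · rintro ⟨rfl | rfl, h⟩
        · linarith
        · rfl
      · rintro rfl; exact ⟨Or.inr rfl, h12⟩
    have hl : {s ∈ Set.range ![x₁, x₁, x₂] | s < x₁} = ∅ := by
      rw [hrangeA]; ext s; simp; rintro (rfl | rfl) <;> linarith
    simp only [utilShared, util] at hc
    rw [show ![x₁, x₁, x₂] 1 = x₁ from rfl] at hc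
    rw [he, hl, hcard] at hc
    simp [csInf_singleton, F0] at hc
    linarith [hc]
  -- deviation B: candidate 2 moves to any p ∈ (x₂, 1]
  have hdevB : ∀ p : ℝ, x₂ < p → p ≤ 1 →
      1 - Fcdf f ((p + x₂) / 2) ≤ (1 - Fcdf f ((x₁ + x₂) / 2)) / 2 + ε := by
    intro p hp2 hp1
    have hx1p : x₁ < p := lt_trans h12 hp2
    have hc := heq 1 p ⟨by linarith, hp1⟩
    rw [hU2] at hc
    rw [show Function.update ![x₁, x₂, x₂] 1 p = ![x₁, p, x₂] from by
      ext j; fin_cases j <;> simp [Function.update]] at hc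
    have hrangeB : Set.range ![x₁, p, x₂] = {x₁, p, x₂} := by
      ext s
      simp [Matrix.range_cons, Matrix.range_empty]
      tauto
    have hcard : Nat.card {j : Fin 3 // ![x₁, p, x₂] j = p} = 1 := by
      rw [Nat.card_eq_fintype_card, Fintype.card_subtype,
        show (Finset.univ.filter fun j => ![x₁, p, x₂] j = p) = {1} from by
          ext j; fin_cases j <;> simp [hx1p.ne, hp2.ne]]
      decide
    have he : {s ∈ Set.range ![x₁, p, x₂] | p < s} = ∅ := by
      rw [hrangeB]; ext s; simp; rintro (rfl | rfl | rfl) <;> linarith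
    have hl : {s ∈ Set.range ![x₁, p, x₂] | s < p} = {x₁, x₂} := by
      rw [hrangeB]; ext s
      simp only [Set.mem_setOf_eq, Set.mem_insert_iff, Set.mem_singleton_iff]
      constructor
      · rintro ⟨rfl | rfl | rfl, h⟩
        · exact Or.inl rfl
        · linarith
        · exact Or.inr rfl
      · rintro (rfl | rfl)
        · exact ⟨Or.inl rfl, hx1p⟩
        · exact ⟨Or.inr (Or.inr rfl), hp2⟩
    have hsup : sSup ({x₁, x₂} : Set ℝ) = x₂ := by
      rw [csSup_pair]; exact sup_eq_right.mpr h12.le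
    simp only [utilShared, util] at hc
    rw [show ![x₁, p, x₂] 1 = p from rfl] at hc
    rw [he, hl, hcard, hsup] at hc
    simp [F1] at hc
    linarith [hc]
  -- consequence: 1 - F(x₂) ≤ (1 - F(τ))/2 + ε
  have hFτ0 : 0 ≤ Fcdf f ((x₁ + x₂) / 2) := by
    have := hmono 0 ((x₁ + x₂) / 2) le_rfl hτ0 hτ1
    linarith [F0 ▸ this]
  have key2 : 1 - Fcdf f x₂ ≤ (1 - Fcdf f ((x₁ + x₂) / 2)) / 2 + ε := by
    rcases eq_or_lt_of_le h3 with h | h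
    · have hFx2 : Fcdf f x₂ = 1 := by rw [h]; exact F1
      linarith
    · refine le_of_forall_pos_le_add ?_
      intro δ hδ
      set p := min (x₂ + 2 * δ / M) 1 with hpdef
      have hδM : 0 < 2 * δ / M := div_pos (by linarith) hM
      have hp2 : x₂ < p := lt_min (by linarith) h
      have hp1 : p ≤ 1 := min_le_right _ _
      have hple : p ≤ x₂ + 2 * δ / M := min_le_left _ _
      have hmid1 : (p + x₂) / 2 ≤ 1 := by linarith
      have hmid2 : x₂ ≤ (p + x₂) / 2 := by linarith
      have hL := hlip x₂ ((p + x₂) / 2) hx20 hmid2 hmid1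
      have hMd : M * ((p + x₂) / 2 - x₂) ≤ δ := by
        have hd : 2 * δ / M = 2 * (δ / M) := by ring
        have h1 : (p + x₂) / 2 - x₂ ≤ δ / M := by linarith
        calc M * ((p + x₂) / 2 - x₂) ≤ M * (δ / M) :=
              mul_le_mul_of_nonneg_left h1 hM.le
          _ = δ := by field_simp
      have := hdevB p hp2 hp1
      linarith
  -- the γ inequality
  have keyγ : Fcdf f x₂ - Fcdf f ((x₁ + x₂) / 2) ≤ γ := by
    have h1 := hγF x₂ ⟨hx20, h3⟩
    have h2 := hmono (x₂ / 2) ((x₁ + x₂) / 2) (by linarith) (by linarith) hτ1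
    linarith
  linarith
end
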